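/- arXiv:2603.16380 — 4 statements merged into one kernel-verified Lean document; each statement's English description precedes it below -/
import Mathlib

section
/- For every m ∈ ℕ, κ ≥ 0 and x₁, x₂ ∈ ℝ, the integral ∫_ℝ |y|^m exp(κ(x₁ - y) - e^{x₁-y} - e^{y-x₂}) dy is finite and bounded by P(|x₁|,|x₂|) · exp(([κ(x₁-x₂)/2 - e^{(x₁-x₂)/2}]) · θ(x₁-x₂)), where P is a polynomial in |x₁|, |x₂| (depending on m, κ) and θ is the Heaviside step function (θ(t)=1 for t ≥ 0, θ(t)=0 for t < 0). -/
/-!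
Write `φ(y) = κ (x₁ - y) - e^(x₁ - y) - e^(y - x₂)` and let `E` be the exponent of the claimed
exponential factor. One shows `φ(y) ≤ A + E - 2 dist(y, [a, b])`, with `A` depending on `κ` only
and `[a, b]` the midpoint `{(x₁ + x₂)/2}` if `x₂ ≤ x₁`, and `[x₁, x₂]` otherwise. The ingredients
are `L u - eᵘ ≤ L log L` and, when `x₂ ≤ x₁`, `e^(s - t) + e^(s + t) ≥ e^s + e^|t| - 1` for
`s ≥ 0`. As `|y|^m ≤ m! e (R + 1)^m e^dist(y, [a, b])` for `|a|, |b| ≤ R`, the integrand is then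
dominated by a polynomial in `R` times `e^E e^(-dist(y, [a, b]))`, whose integral `b - a + 2` is
linear in `R`.
-/

open MeasureTheory

noncomputable def theta (t : ℝ) : ℝ := if 0 ≤ t then 1 else 0

open Real Set
open scoped Nat

namespace MvPolynomial

def nonnegCoeffs (σ R : Type*) [CommSemiring R] [PartialOrder R] [IsOrderedRing R] :
    Subsemiring (MvPolynomial σ R) where
  carrier := {p | ∀ d, 0 ≤ p.coeff d}
  mul_mem' {p q} hp hq d := by
    classical
    rw [coeff_mul]
    exact Finset.sum_nonneg fun x _ => mul_nonneg (hp _) (hq _)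
  one_mem' d := by
    classical
    rw [coeff_one]
    split_ifs <;> simp
  add_mem' hp hq d := by
    rw [coeff_add]
    exact add_nonneg (hp d) (hq d)
  zero_mem' d := by simp

variable {σ R : Type*} [CommSemiring R] [PartialOrder R] [IsOrderedRing R]

lemma C_mem_nonnegCoeffs {r : R} (hr : 0 ≤ r) : C r ∈ nonnegCoeffs σ R := fun d => by
  classical
  rw [coeff_C]
  split_ifs <;> simp [hr]

lemma X_mem_nonnegCoeffs (i : σ) : X i ∈ nonnegCoeffs σ R := fun d => by
  classical
  rw [coeff_X]
  split_ifs <;> simp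

end MvPolynomial

lemma mul_sub_exp_le {L : ℝ} (hL : 0 < L) (u : ℝ) : L * u - exp u ≤ L * log L - L := by
  have h := add_one_le_exp (u - log L)
  rw [exp_sub, exp_log hL, le_div_iff₀ hL] at h
  linarith

lemma mul_max_sub_exp_le {L : ℝ} (hL : 1 ≤ L) (u : ℝ) : L * max u 0 - exp u ≤ L * log L := by
  have hlog : 0 ≤ L * log L := mul_nonneg (by linarith) (log_nonneg hL)
  rcases le_total 0 u with hu | hu
  · rw [max_eq_left hu]
    linarith [mul_sub_exp_le (by linarith : 0 < L) u]
  · rw [max_eq_right hu]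
    linarith [exp_pos u]

lemma exp_add_exp_sub_one_le_exp_add {s t : ℝ} (hs : 0 ≤ s) (ht : 0 ≤ t) :
    exp s + exp t - 1 ≤ exp (s + t) := by
  rw [exp_add]
  nlinarith [one_le_exp hs, one_le_exp ht]

lemma pow_le_factorial_mul_exp {x : ℝ} (hx : 0 ≤ x) (n : ℕ) : x ^ n ≤ n ! * exp x := by
  have := Real.pow_div_factorial_le_exp x hx n
  rwa [div_le_iff₀ (by positivity), mul_comm] at this

/-- The distance from `y` to `Icc a b` when `a ≤ b`. -/
def distIcc (a b y : ℝ) : ℝ := max (a - y) 0 + max (y - b) 0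

lemma distIcc_nonneg (a b y : ℝ) : 0 ≤ distIcc a b y :=
  add_nonneg (le_max_right _ _) (le_max_right _ _)

lemma distIcc_self (c y : ℝ) : distIcc c c y = |y - c| := by
  unfold distIcc
  rcases le_total y c with h | h
  · rw [max_eq_left (by linarith), max_eq_right (by linarith), abs_of_nonpos (by linarith)]
    ring
  · rw [max_eq_right (by linarith), max_eq_left (by linarith), abs_of_nonneg (by linarith)]
    ring

lemma continuous_distIcc (a b : ℝ) : Continuous (distIcc a b) := by
  unfold distIcc
  fun_prop

lemma abs_le_add_distIcc {a b R : ℝ} (ha : |a| ≤ R) (hb : |b| ≤ R) (y : ℝ) :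
    |y| ≤ R + distIcc a b y := by
  unfold distIcc
  rw [abs_le] at *
  constructor <;> linarith [le_max_left (a - y) 0, le_max_right (a - y) 0,
    le_max_left (y - b) 0, le_max_right (y - b) 0]

lemma abs_pow_le_mul_exp_distIcc {a b R : ℝ} (ha : |a| ≤ R) (hb : |b| ≤ R) (m : ℕ) (y : ℝ) :
    |y| ^ m ≤ m ! * (R + 1) ^ m * exp (1 + distIcc a b y) := by
  have hR : 0 ≤ R := (abs_nonneg a).trans ha
  have hd := distIcc_nonneg a b y
  have hy : |y| ≤ (R + 1) * (1 + distIcc a b y) := by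
    nlinarith [abs_le_add_distIcc ha hb y, mul_nonneg hR hd]
  calc |y| ^ m ≤ ((R + 1) * (1 + distIcc a b y)) ^ m := by gcongr
    _ = (R + 1) ^ m * (1 + distIcc a b y) ^ m := mul_pow _ _ _
    _ ≤ (R + 1) ^ m * (m ! * exp (1 + distIcc a b y)) := by
      gcongr
      exact pow_le_factorial_mul_exp (by linarith) m
    _ = _ := by ring

lemma integrable_exp_neg_distIcc_and_integral_eq {a b : ℝ} (hab : a ≤ b) :
    Integrable (fun y => exp (-distIcc a b y)) ∧ ∫ y, exp (-distIcc a b y) = b - a + 2 := by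
  set G : ℝ → ℝ := fun y => exp (-distIcc a b y)
  have hleft : EqOn (fun y => exp y * exp (-a)) G (Iic a) := fun y (hy : y ≤ a) => by
    simp only [G, distIcc, max_eq_left (sub_nonneg.2 hy),
      max_eq_right (by linarith : y - b ≤ 0), ← exp_add]
    ring_nf
  have hmid : EqOn (fun _ => 1) G (Icc a b) := fun y ⟨hay, hyb⟩ => by
    simp [G, distIcc, hay, hyb]
  have hright : EqOn (fun y => exp (-y) * exp b) G (Ioi b) := fun y (hy : b < y) => by
    simp only [G, distIcc, max_eq_right (by linarith : a - y ≤ 0),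
      max_eq_left (by linarith : 0 ≤ y - b), ← exp_add]
    ring_nf
  have hIic_a : IntegrableOn G (Iic a) :=
    IntegrableOn.congr_fun ((integrableOn_exp_Iic a).mul_const _) hleft measurableSet_Iic
  have hIoi : IntegrableOn G (Ioi b) :=
    IntegrableOn.congr_fun ((integrableOn_exp_neg_Ioi b).mul_const _) hright
      measurableSet_Ioi
  have hIic_b : IntegrableOn G (Iic b) := by
    rw [← Iic_union_Icc_eq_Iic hab]
    exact hIic_a.union ((continuous_distIcc a b).neg.rexp.integrableOn_Icc)
  have hint : Integrable G := by
    rw [← integrableOn_univ, ← Iic_union_Ioi (a := b)]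
    exact hIic_b.union hIoi
  refine ⟨hint, ?_⟩
  have hval_left : ∫ y in Iic a, G y = 1 := by
    rw [← setIntegral_congr_fun measurableSet_Iic hleft, integral_mul_const, integral_exp_Iic,
      ← exp_add, add_neg_cancel, exp_zero]
  have hval_mid : ∫ y in a..b, G y = b - a := by
    rw [intervalIntegral.integral_congr (g := fun _ => 1) ?_, intervalIntegral.integral_const,
      smul_eq_mul, mul_one]
    rw [uIcc_of_le hab]
    exact hmid.symm
  have hval_right : ∫ y in Ioi b, G y = 1 := by
    rw [← setIntegral_congr_fun measurableSet_Ioi hright, integral_mul_const,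
      integral_exp_neg_Ioi, ← exp_add, neg_add_cancel, exp_zero]
  rw [← intervalIntegral.integral_Iic_add_Ioi hIic_b hIoi, hval_right,
    ← sub_add_cancel (∫ y in Iic b, G y) (∫ y in Iic a, G y),
    intervalIntegral.integral_Iic_sub_Iic hIic_a hIic_b, hval_mid, hval_left]
  ring

lemma integrable_abs_pow_mul_exp_and_integral_le {f : ℝ → ℝ} (hf : Continuous f) (m : ℕ)
    {a b R B : ℝ} (hab : a ≤ b) (ha : |a| ≤ R) (hb : |b| ≤ R)
    (hfle : ∀ y, f y ≤ B - 2 * distIcc a b y) :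
    Integrable (fun y => |y| ^ m * exp (f y)) ∧
      ∫ y, |y| ^ m * exp (f y) ≤ 2 * m ! * exp 1 * (R + 1) ^ (m + 1) * exp B := by
  obtain ⟨hGint, hGval⟩ := integrable_exp_neg_distIcc_and_integral_eq hab
  have hR : 0 ≤ R := (abs_nonneg a).trans ha
  set C := m ! * (R + 1) ^ m * exp 1 * exp B
  have hC : 0 ≤ C := by positivity
  have hbound (y : ℝ) : |y| ^ m * exp (f y) ≤ C * exp (-distIcc a b y) :=
    calc |y| ^ m * exp (f y)
        ≤ (m ! * (R + 1) ^ m * exp (1 + distIcc a b y)) * exp (B - 2 * distIcc a b y) :=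
          mul_le_mul (abs_pow_le_mul_exp_distIcc ha hb m y) (exp_le_exp.2 (hfle y))
            (by positivity) (by positivity)
      _ = C * exp (-distIcc a b y) := by
          simp only [C, mul_assoc, ← exp_add]
          ring_nf
  have hint : Integrable fun y => |y| ^ m * exp (f y) := by
    refine (hGint.const_mul C).mono' (by fun_prop) (.of_forall fun y => ?_)
    rw [norm_of_nonneg (by positivity)]
    exact hbound y
  refine ⟨hint, ?_⟩
  calc ∫ y, |y| ^ m * exp (f y) ≤ ∫ y, C * exp (-distIcc a b y) :=
        integral_mono hint (hGint.const_mul C) hbound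
    _ = C * (b - a + 2) := by rw [integral_const_mul, hGval]
    _ ≤ C * (2 * (R + 1)) := by
        gcongr
        linarith [(abs_le.1 ha).1, (abs_le.1 hb).2]
    _ = 2 * m ! * exp 1 * (R + 1) ^ (m + 1) * exp B := by ring

noncomputable def integrandExponent (κ x₁ x₂ y : ℝ) : ℝ :=
  κ * (x₁ - y) - exp (x₁ - y) - exp (y - x₂)

lemma continuous_integrandExponent (κ x₁ x₂ : ℝ) : Continuous (integrandExponent κ x₁ x₂) := by
  unfold integrandExponent
  fun_prop

lemma integrandExponent_add_two_mul_abs_le {κ x₁ x₂ : ℝ} (hκ : 0 ≤ κ) (h : x₂ ≤ x₁) (y : ℝ) :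
    integrandExponent κ x₁ x₂ y + 2 * |y - (x₁ + x₂) / 2|
      ≤ (κ + 2) * log (κ + 2) + 1 + (κ * (x₁ - x₂) / 2 - exp ((x₁ - x₂) / 2)) := by
  unfold integrandExponent
  set s := (x₁ - x₂) / 2
  set t := y - (x₁ + x₂) / 2
  have hs : 0 ≤ s := by simp only [s]; linarith
  rw [show x₁ - y = s - t by ring, show y - x₂ = s + t by ring]
  have hcosh : exp (s + |t|) ≤ exp (s - t) + exp (s + t) := by
    rcases abs_cases t with ⟨ht, -⟩ | ⟨ht, -⟩ <;> rw [ht]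
    · linarith [exp_pos (s - t)]
    · rw [← sub_eq_add_neg]
      linarith [exp_pos (s + t)]
  have hκt : -(κ * t) ≤ κ * |t| := by nlinarith [neg_abs_le t]
  have ht := mul_max_sub_exp_le (by linarith : 1 ≤ κ + 2) |t|
  rw [max_eq_left (abs_nonneg t)] at ht
  have hκs : κ * (x₁ - x₂) / 2 = κ * s := by simp only [s]; ring
  linarith [exp_add_exp_sub_one_le_exp_add hs (abs_nonneg t)]

lemma integrandExponent_add_two_mul_distIcc_le {κ : ℝ} (hκ : 0 ≤ κ) (x₁ x₂ y : ℝ) :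
    integrandExponent κ x₁ x₂ y + 2 * distIcc x₁ x₂ y
      ≤ 2 * ((κ + 2) * log (κ + 2)) := by
  have hu := mul_max_sub_exp_le (by linarith : 1 ≤ κ + 2) (x₁ - y)
  have hv := mul_max_sub_exp_le (by linarith : 1 ≤ κ + 2) (y - x₂)
  have hκu : κ * (x₁ - y) ≤ κ * max (x₁ - y) 0 := mul_le_mul_of_nonneg_left (le_max_left _ _) hκ
  have hκv : 0 ≤ κ * max (y - x₂) 0 := mul_nonneg hκ (le_max_right _ _)
  unfold integrandExponent distIcc
  linarith

lemma exists_integrandExponent_le_sub_two_mul_distIcc {κ : ℝ} (hκ : 0 ≤ κ) (x₁ x₂ : ℝ) :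
    ∃ a b, a ≤ b ∧ |a| ≤ |x₁| + |x₂| ∧ |b| ≤ |x₁| + |x₂| ∧ ∀ y,
      integrandExponent κ x₁ x₂ y ≤
        2 * ((κ + 2) * log (κ + 2)) + 1 +
          (κ * (x₁ - x₂) / 2 - exp ((x₁ - x₂) / 2)) * theta (x₁ - x₂) - 2 * distIcc a b y := by
  have hlog : 0 ≤ (κ + 2) * log (κ + 2) := mul_nonneg (by linarith) (log_nonneg (by linarith))
  rcases le_or_gt x₂ x₁ with h | h
  · have hθ : theta (x₁ - x₂) = 1 := if_pos (sub_nonneg.2 h)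
    have hc : |(x₁ + x₂) / 2| ≤ |x₁| + |x₂| := by
      rw [abs_div, abs_two]
      linarith [abs_add_le x₁ x₂, abs_nonneg (x₁ + x₂)]
    refine ⟨(x₁ + x₂) / 2, (x₁ + x₂) / 2, le_rfl, hc, hc, fun y => ?_⟩
    rw [hθ, mul_one, distIcc_self]
    linarith [integrandExponent_add_two_mul_abs_le hκ h y]
  · have hθ : theta (x₁ - x₂) = 0 := if_neg (by linarith)
    refine ⟨x₁, x₂, h.le, le_add_of_nonneg_right (abs_nonneg _),
      le_add_of_nonneg_left (abs_nonneg _), fun y => ?_⟩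
    rw [hθ, mul_zero]
    linarith [integrandExponent_add_two_mul_distIcc_le hκ x₁ x₂ y]

theorem stmt1 (m : ℕ) (κ : ℝ) (hκ : 0 ≤ κ) :
    ∃ P : MvPolynomial (Fin 2) ℝ, (∀ d, 0 ≤ P.coeff d) ∧
      ∀ x₁ x₂ : ℝ,
        Integrable (fun y : ℝ =>
          |y| ^ m * Real.exp (κ * (x₁ - y) - Real.exp (x₁ - y) - Real.exp (y - x₂))) ∧
        (∫ y : ℝ, |y| ^ m * Real.exp (κ * (x₁ - y) - Real.exp (x₁ - y) - Real.exp (y - x₂)))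
          ≤ MvPolynomial.eval ![|x₁|, |x₂|] P *
            Real.exp ((κ * (x₁ - x₂) / 2 - Real.exp ((x₁ - x₂) / 2)) * theta (x₁ - x₂)) := by
  open MvPolynomial in
  refine ⟨C (2 * m ! * exp 1 * exp (2 * ((κ + 2) * log (κ + 2)) + 1)) * (1 + X 0 + X 1) ^ (m + 1),
    mul_mem (C_mem_nonnegCoeffs (by positivity))
      (pow_mem (add_mem (add_mem (one_mem _) (X_mem_nonnegCoeffs 0)) (X_mem_nonnegCoeffs 1)) _),
    fun x₁ x₂ => ?_⟩
  obtain ⟨a, b, hab, ha, hb, hf⟩ := exists_integrandExponent_le_sub_two_mul_distIcc hκ x₁ x₂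
  obtain ⟨hint, hle⟩ :=
    integrable_abs_pow_mul_exp_and_integral_le
      (continuous_integrandExponent κ x₁ x₂) m hab ha hb hf
  refine ⟨hint, hle.trans_eq ?_⟩
  rw [exp_add (2 * ((κ + 2) * log (κ + 2)) + 1)]
  simp only [map_mul, map_pow, map_add, map_one, MvPolynomial.eval_C, MvPolynomial.eval_X,
    Matrix.cons_val_zero, Matrix.cons_val_one, Matrix.cons_val_fin_one]
  ring
end

section
/- For every m ∈ ℕ, κ₁, κ₂ ≥ 0 and x₁, x₂ ∈ ℝ, the integral ∫_ℝ |y|^m exp(κ₁(x₁-y) + κ₂(y-x₂) - e^{x₁-y} - e^{y-x₂}) dy is bounded by P(|x₁|,|x₂|) · exp(([(κ₁+κ₂)(x₁-x₂)/2 - e^{(x₁-x₂)/2}]) · θ(x₁-x₂)), where P is a polynomial in |x₁| and |x₂| depending on m, κ₁, κ₂, and θ is the Heaviside step function. -/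
open MeasureTheory

/-!
Write `p = x₁ - y` and `q = y - x₂`, so that `p + q = x₁ - x₂`. Where `q ≤ p`, convexity of `exp`
gives `e^((p+q)/2) ≤ (e^p + e^q)/2`, and half of `e^p` together with `e^q` and `κ₂ q` pays for the
factor `(κ₁+κ₂)(p+q)/2 - e^((p+q)/2)` when `p + q ≥ 0` (when `p + q < 0`, `q < 0` and nothing has
to be paid). What is left is the one-sided weight `κ₁ p - e^p/2`; symmetrically where `p ≤ q`.
Since `p ≥ -(|x₁| + |x₂|)` on that region and the weight decays super-exponentially as `p → ∞`,
`|y|^m e^(κ₁ p - e^p/2)` is at most a polynomial in `|x₁|, |x₂|` times `(1 + p²)⁻¹`, whose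
integral is `π`.
-/

open Real

namespace MvPolynomial

variable (σ R : Type*) [CommSemiring R] [PartialOrder R] [IsOrderedRing R]

def nonnegCoeffSubsemiring : Subsemiring (MvPolynomial σ R) where
  carrier := {p | ∀ d, 0 ≤ p.coeff d}
  zero_mem' d := by simp
  one_mem' d := by
    classical
    rw [coeff_one]
    split_ifs <;> simp
  add_mem' hp hq d := by
    rw [coeff_add]
    exact add_nonneg (hp d) (hq d)
  mul_mem' hp hq d := by
    classical
    rw [coeff_mul]
    exact Finset.sum_nonneg fun x _ => mul_nonneg (hp _) (hq _)

variable {σ R}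

theorem C_mem_nonnegCoeffSubsemiring {c : R} (hc : 0 ≤ c) :
    C c ∈ nonnegCoeffSubsemiring σ R := fun d => by
  classical
  rw [coeff_C]
  split_ifs <;> simp [hc]

theorem X_mem_nonnegCoeffSubsemiring (i : σ) : X i ∈ nonnegCoeffSubsemiring σ R := fun d => by
  classical
  rw [coeff_X]
  split_ifs <;> simp

end MvPolynomial

theorem mul_sub_exp_div_two_le {μ : ℝ} (hμ : 0 ≤ μ) (u : ℝ) : μ * u - exp u / 2 ≤ μ ^ 2 := by
  rcases le_total u 0 with hu | hu
  · nlinarith [exp_pos u, mul_nonpos_of_nonneg_of_nonpos hμ hu]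
  · nlinarith [quadratic_le_exp_of_nonneg hu, sq_nonneg (u - 2 * μ)]

theorem one_add_pow_mul_exp_le (n : ℕ) {κ u : ℝ} (hκ : 0 ≤ κ) (hu : 0 ≤ u) :
    (1 + u) ^ n * exp (κ * u - exp u / 2) ≤ exp ((n + κ) ^ 2) := by
  have hpow : (1 + u) ^ n ≤ exp (n * u) := by
    rw [exp_nat_mul]
    exact pow_le_pow_left₀ (by linarith) (by linarith [add_one_le_exp u]) n
  calc (1 + u) ^ n * exp (κ * u - exp u / 2)
      ≤ exp (n * u) * exp (κ * u - exp u / 2) := by gcongr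
    _ = exp ((n + κ) * u - exp u / 2) := by rw [← exp_add]; ring_nf
    _ ≤ exp ((n + κ) ^ 2) := exp_le_exp.2 (mul_sub_exp_div_two_le (by positivity) u)

theorem one_add_abs_pow_mul_exp_mul_one_add_sq_le (m : ℕ) {κ S u : ℝ} (hκ : 0 ≤ κ) (hS : 0 ≤ S)
    (hu : -S ≤ u) :
    (1 + |u|) ^ m * exp (κ * u - exp u / 2) * (1 + u ^ 2)
      ≤ exp ((m + 2 + κ) ^ 2) * (1 + S) ^ (m + 2) := by
  have hK : 1 ≤ exp ((m + 2 + κ) ^ 2) := one_le_exp (sq_nonneg _)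
  rcases le_total 0 u with hu0 | hu0
  · have hpoly : (1 + u) ^ m * (1 + u ^ 2) ≤ (1 + u) ^ (m + 2) := by
      rw [pow_add]
      gcongr
      nlinarith
    calc (1 + |u|) ^ m * exp (κ * u - exp u / 2) * (1 + u ^ 2)
        ≤ (1 + u) ^ (m + 2) * exp (κ * u - exp u / 2) := by
          rw [abs_of_nonneg hu0, mul_right_comm]; gcongr
      _ ≤ exp ((m + 2 + κ) ^ 2) := by exact_mod_cast one_add_pow_mul_exp_le (m + 2) hκ hu0
      _ ≤ exp ((m + 2 + κ) ^ 2) * (1 + S) ^ (m + 2) :=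
          le_mul_of_one_le_right (by positivity) (one_le_pow₀ (by linarith))
  · have hweight : exp (κ * u - exp u / 2) ≤ 1 :=
      exp_le_one_iff.2 (by nlinarith [exp_pos u])
    have habs : 1 + |u| ≤ 1 + S := by rw [abs_of_nonpos hu0]; linarith
    have hsq : 1 + u ^ 2 ≤ (1 + S) ^ 2 := by nlinarith
    calc (1 + |u|) ^ m * exp (κ * u - exp u / 2) * (1 + u ^ 2)
        ≤ (1 + S) ^ m * 1 * (1 + S) ^ 2 := by gcongr
      _ = 1 * (1 + S) ^ (m + 2) := by ring
      _ ≤ exp ((m + 2 + κ) ^ 2) * (1 + S) ^ (m + 2) := by gcongr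

theorem abs_pow_mul_exp_le_mul_inv_one_add_sq (m : ℕ) {κ S u y : ℝ} (hκ : 0 ≤ κ) (hS : 0 ≤ S)
    (hu : -S ≤ u) (hy : |y| ≤ S + |u|) :
    |y| ^ m * exp (κ * u - exp u / 2)
      ≤ (1 + S) ^ (2 * m + 2) * (exp ((m + 2 + κ) ^ 2) * (1 + u ^ 2)⁻¹) := by
  have hy' : |y| ^ m ≤ (1 + S) ^ m * (1 + |u|) ^ m := by
    rw [← mul_pow]
    gcongr
    nlinarith [abs_nonneg u]
  have hbound := one_add_abs_pow_mul_exp_mul_one_add_sq_le m hκ hS hu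
  rw [← mul_assoc, ← div_eq_mul_inv, le_div_iff₀ (by positivity)]
  calc |y| ^ m * exp (κ * u - exp u / 2) * (1 + u ^ 2)
      ≤ (1 + S) ^ m * ((1 + |u|) ^ m * exp (κ * u - exp u / 2) * (1 + u ^ 2)) := by
        rw [← mul_assoc, ← mul_assoc]; gcongr
    _ ≤ (1 + S) ^ m * (exp ((m + 2 + κ) ^ 2) * (1 + S) ^ (m + 2)) := by gcongr
    _ = (1 + S) ^ (2 * m + 2) * exp ((m + 2 + κ) ^ 2) := by ring

theorem mul_add_mul_sub_exp_sub_exp_le {κ₁ κ₂ p q : ℝ} (hκ₁ : 0 ≤ κ₁) (hκ₂ : 0 ≤ κ₂) (hqp : q ≤ p) :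
    κ₁ * p + κ₂ * q - exp p - exp q
      ≤ ((κ₁ + κ₂) * (p + q) / 2 - exp ((p + q) / 2)) * theta (p + q)
        + (κ₁ * p - exp p / 2) := by
  unfold theta
  split_ifs with hpq
  · have hconv : exp ((p + q) / 2) ≤ (exp p + exp q) / 2 := by
      calc exp ((p + q) / 2) = exp ((1 / 2 : ℝ) • p + (1 / 2 : ℝ) • q) := by
            simp only [smul_eq_mul]; ring_nf
        _ ≤ (1 / 2 : ℝ) • exp p + (1 / 2 : ℝ) • exp q :=
            convexOn_exp.2 (Set.mem_univ p) (Set.mem_univ q) (by norm_num) (by norm_num)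
              (by norm_num)
        _ = (exp p + exp q) / 2 := by simp only [smul_eq_mul]; ring
    nlinarith [exp_pos q]
  · nlinarith [exp_pos p, exp_pos q]

theorem abs_pow_mul_exp_le_add_inv_one_add_sq (m : ℕ) {κ₁ κ₂ : ℝ} (hκ₁ : 0 ≤ κ₁) (hκ₂ : 0 ≤ κ₂)
    (x₁ x₂ y : ℝ) :
    |y| ^ m * exp (κ₁ * (x₁ - y) + κ₂ * (y - x₂) - exp (x₁ - y) - exp (y - x₂))
      ≤ exp (((κ₁ + κ₂) * (x₁ - x₂) / 2 - exp ((x₁ - x₂) / 2)) * theta (x₁ - x₂))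
        * (1 + (|x₁| + |x₂|)) ^ (2 * m + 2)
        * (exp ((m + 2 + κ₁) ^ 2) * (1 + (y - x₁) ^ 2)⁻¹
          + exp ((m + 2 + κ₂) ^ 2) * (1 + (y - x₂) ^ 2)⁻¹) := by
  set A := exp (((κ₁ + κ₂) * (x₁ - x₂) / 2 - exp ((x₁ - x₂) / 2)) * theta (x₁ - x₂)) with hA
  have hA0 : 0 ≤ A := (exp_pos _).le
  have hS : 0 ≤ |x₁| + |x₂| := by positivity
  have hx₁ := abs_le.1 (le_refl |x₁|)
  have hx₂ := abs_le.1 (le_refl |x₂|)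
  have hy₁ := abs_le.1 (le_refl |x₁ - y|)
  have hy₂ := abs_le.1 (le_refl |y - x₂|)
  rcases le_total (y - x₂) (x₁ - y) with h | h
  · have he := mul_add_mul_sub_exp_sub_exp_le hκ₁ hκ₂ h
    rw [show x₁ - y + (y - x₂) = x₁ - x₂ by ring] at he
    have ht := abs_pow_mul_exp_le_mul_inv_one_add_sq m hκ₁ hS (u := x₁ - y) (y := y) (by linarith)
      (abs_le.2 ⟨by linarith, by linarith⟩)
    rw [show (x₁ - y) ^ 2 = (y - x₁) ^ 2 by ring] at ht
    calc _ ≤ A * (|y| ^ m * exp (κ₁ * (x₁ - y) - exp (x₁ - y) / 2)) := by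
          rw [mul_left_comm]; gcongr; rw [hA, ← exp_add]; gcongr
      _ ≤ _ := by
          grw [ht]; rw [mul_assoc]; gcongr; exact le_add_of_nonneg_right (by positivity)
  · have he := mul_add_mul_sub_exp_sub_exp_le hκ₂ hκ₁ h
    rw [show y - x₂ + (x₁ - y) = x₁ - x₂ by ring, add_comm κ₂] at he
    have ht := abs_pow_mul_exp_le_mul_inv_one_add_sq m hκ₂ hS (u := y - x₂) (y := y) (by linarith)
      (abs_le.2 ⟨by linarith, by linarith⟩)
    calc _ ≤ A * (|y| ^ m * exp (κ₂ * (y - x₂) - exp (y - x₂) / 2)) := by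
          rw [mul_left_comm]; gcongr; rw [hA, ← exp_add]; gcongr; linarith
      _ ≤ _ := by
          grw [ht]; rw [mul_assoc]; gcongr; exact le_add_of_nonneg_left (by positivity)

theorem integrable_inv_one_add_sub_sq (c : ℝ) : Integrable fun y : ℝ => (1 + (y - c) ^ 2)⁻¹ :=
  integrable_inv_one_add_sq.comp_sub_right c

theorem integral_inv_one_add_sub_sq (c : ℝ) : ∫ y : ℝ, (1 + (y - c) ^ 2)⁻¹ = π :=
  (integral_sub_right_eq_self (fun y : ℝ => (1 + y ^ 2)⁻¹) c).trans integral_univ_inv_one_add_sq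

open MvPolynomial in
theorem stmt2 (m : ℕ) (κ₁ κ₂ : ℝ) (hκ₁ : 0 ≤ κ₁) (hκ₂ : 0 ≤ κ₂) :
    ∃ P : MvPolynomial (Fin 2) ℝ, (∀ d, 0 ≤ P.coeff d) ∧
      ∀ x₁ x₂ : ℝ,
        Integrable (fun y : ℝ =>
          |y| ^ m * Real.exp (κ₁ * (x₁ - y) + κ₂ * (y - x₂)
            - Real.exp (x₁ - y) - Real.exp (y - x₂))) ∧
        (∫ y : ℝ, |y| ^ m * Real.exp (κ₁ * (x₁ - y) + κ₂ * (y - x₂)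
            - Real.exp (x₁ - y) - Real.exp (y - x₂)))
          ≤ MvPolynomial.eval ![|x₁|, |x₂|] P *
            Real.exp (((κ₁ + κ₂) * (x₁ - x₂) / 2 - Real.exp ((x₁ - x₂) / 2)) * theta (x₁ - x₂)) := by
  refine ⟨C (π * (exp ((m + 2 + κ₁) ^ 2) + exp ((m + 2 + κ₂) ^ 2))) * (1 + X 0 + X 1) ^ (2 * m + 2),
    fun d => ?_, fun x₁ x₂ => ?_⟩
  · refine mul_mem (C_mem_nonnegCoeffSubsemiring (by positivity)) (pow_mem ?_ _) d
    exact add_mem (add_mem (one_mem _) (X_mem_nonnegCoeffSubsemiring 0))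
      (X_mem_nonnegCoeffSubsemiring 1)
  have hbound := abs_pow_mul_exp_le_add_inv_one_add_sq m hκ₁ hκ₂ x₁ x₂
  have hdom := ((integrable_inv_one_add_sub_sq x₁).const_mul (exp ((m + 2 + κ₁) ^ 2))).add
    ((integrable_inv_one_add_sub_sq x₂).const_mul (exp ((m + 2 + κ₂) ^ 2))) |>.const_mul
    (exp (((κ₁ + κ₂) * (x₁ - x₂) / 2 - exp ((x₁ - x₂) / 2)) * theta (x₁ - x₂))
      * (1 + (|x₁| + |x₂|)) ^ (2 * m + 2))
  refine ⟨hdom.mono' (by fun_prop) (ae_of_all _ fun y => ?_), ?_⟩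
  · rw [Real.norm_of_nonneg (by positivity)]
    exact hbound y
  calc _ ≤ _ :=
        integral_mono_of_nonneg (ae_of_all _ fun y => by positivity) hdom (ae_of_all _ hbound)
    _ = _ := by
      simp only [Pi.add_apply]
      rw [integral_const_mul, integral_add ((integrable_inv_one_add_sub_sq x₁).const_mul _)
          ((integrable_inv_one_add_sub_sq x₂).const_mul _),
        integral_const_mul, integral_const_mul, integral_inv_one_add_sub_sq,
        integral_inv_one_add_sub_sq]
      simp only [map_mul, map_pow, map_add, map_one, eval_C, eval_X, Matrix.cons_val_zero,
        Matrix.cons_val_one]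
      ring
end

section
/- For every m ∈ ℕ, g > 0, κ ≥ 0 and x ∈ ℝ, the integral ∫₀^∞ y^m (1 + e^{-y})^{-g} (1 - e^{-y})^{g-1} exp(κ(y+x) - e^{y+x}) dy is finite and bounded by P(|x|) · exp([κx - e^x] · θ(x)), where P is a polynomial in |x| depending on m, g, κ, and θ is the Heaviside step function. -/
/-!
Write the integrand as `w(y) K(y + x)` with `w(y) = yᵐ (1 + e^{-y})^{-g} (1 - e^{-y})^{g-1}` and
`K(t) = exp (κ t - eᵗ)`. The weight satisfies `w(y) ≤ yᵐ (y^{g-1} + 1)`, integrable at `0` and of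
polynomial growth. Since `K(t) (1 + eᵗ)^N` is bounded and `1 + y ≤ (1 + |x|) (1 + e^{y+x})`, we get
`K(y + x) ≤ C (1 + |x|)^N / (1 + y)^N`; for `N` large this gives integrability and the bound
`C' (1 + |x|)^N`, which is the claim for `x < 0`. For `x ≥ 0`, `e^{x+y} ≥ eˣ + eʸ - 1` gives
`K(y + x) ≤ e K(x) K(y)`, hence the bound `e K(x) ∫ w K`.
-/

open MeasureTheory

open Real Set

lemma one_sub_exp_neg_rpow_le {g y : ℝ} (hg : 0 ≤ g) (hy : 0 < y) :
    (1 - exp (-y)) ^ (g - 1) ≤ y ^ (g - 1) + 1 := by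
  have hexp : exp (-y) < 1 := exp_lt_one_iff.mpr (neg_lt_zero.mpr hy)
  have hpos : 0 < 1 - exp (-y) := sub_pos.mpr hexp
  rcases le_total 1 g with hg1 | hg1
  · have : (1 - exp (-y)) ^ (g - 1) ≤ 1 :=
      rpow_le_one hpos.le (by linarith [exp_pos (-y)]) (sub_nonneg.mpr hg1)
    linarith [rpow_nonneg hy.le (g - 1)]
  · -- `1 + y ≤ eʸ` gives `(1 - e^{-y})⁻¹ ≤ y⁻¹ + 1`; then `t ↦ t ^ (1 - g)` is subadditive.
    have hinv : (1 - exp (-y))⁻¹ ≤ y⁻¹ + 1 := by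
      have h1 : (1 + y) * exp (-y) ≤ 1 := by
        rw [exp_neg, ← div_eq_mul_inv, div_le_one (exp_pos y)]
        linarith [add_one_le_exp y]
      rw [inv_le_iff_one_le_mul₀ hpos, add_mul, inv_mul_eq_div, ← sub_nonneg]
      field_simp
      nlinarith
    have hflip : ∀ {t : ℝ}, 0 ≤ t → t ^ (g - 1) = t⁻¹ ^ (1 - g) := fun ht => by
      rw [inv_rpow ht, ← rpow_neg ht, neg_sub]
    rw [hflip hpos.le, hflip hy.le]
    calc (1 - exp (-y))⁻¹ ^ (1 - g) ≤ (y⁻¹ + 1) ^ (1 - g) :=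
          rpow_le_rpow (inv_nonneg.mpr hpos.le) hinv (sub_nonneg.mpr hg1)
      _ ≤ y⁻¹ ^ (1 - g) + 1 ^ (1 - g) :=
          rpow_add_le_add_rpow (inv_nonneg.mpr hy.le) zero_le_one (sub_nonneg.mpr hg1)
            (by linarith)
      _ = y⁻¹ ^ (1 - g) + 1 := by rw [one_rpow]

lemma mul_sub_exp_le_s3 {a : ℝ} (ha : 0 ≤ a) (t : ℝ) : a * t - exp t ≤ a ^ 2 / 2 := by
  rcases le_total 0 t with ht | ht
  · nlinarith [quadratic_le_exp_of_nonneg ht, sq_nonneg (t - a)]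
  · nlinarith [exp_pos t, mul_nonpos_of_nonneg_of_nonpos ha ht]

lemma integrableOn_rpow_div_one_add_pow {s : ℝ} {N : ℕ} (hs : -1 < s) (hN : s + 1 < N) :
    IntegrableOn (fun y : ℝ => y ^ s / (1 + y) ^ N) (Ioi 0) := by
  have hmeas : AEStronglyMeasurable (fun y : ℝ => y ^ s / (1 + y) ^ N) :=
    (by fun_prop : Measurable fun y : ℝ => y ^ s / (1 + y) ^ N).aestronglyMeasurable
  rw [← Ioc_union_Ioi_eq_Ioi zero_le_one, integrableOn_union]
  constructor
  · have hint : IntegrableOn (fun y : ℝ => y ^ s) (Ioc 0 1) :=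
      (intervalIntegrable_iff_integrableOn_Ioc_of_le zero_le_one).mp
        (intervalIntegral.intervalIntegrable_rpow' hs)
    refine hint.mono' hmeas.restrict (ae_restrict_of_forall_mem measurableSet_Ioc ?_)
    rintro y ⟨hy, -⟩
    rw [Real.norm_of_nonneg (by positivity)]
    exact div_le_self (rpow_nonneg hy.le s) (one_le_pow₀ (by linarith))
  · have hint : IntegrableOn (fun y : ℝ => y ^ (s - N)) (Ioi 1) :=
      integrableOn_Ioi_rpow_of_lt (by linarith) zero_lt_one
    refine hint.mono' hmeas.restrict (ae_restrict_of_forall_mem measurableSet_Ioi ?_)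
    intro y (hy : 1 < y)
    have hy0 : 0 < y := by linarith
    rw [Real.norm_of_nonneg (by positivity), rpow_sub hy0, rpow_natCast]
    exact div_le_div_of_nonneg_left (rpow_nonneg hy0.le s) (by positivity)
      (pow_le_pow_left₀ hy0.le (by linarith) N)

namespace GumbelIntegral

noncomputable def weight (m : ℕ) (g y : ℝ) : ℝ :=
  y ^ m * (1 + exp (-y)) ^ (-g) * (1 - exp (-y)) ^ (g - 1)

noncomputable def kernel (κ t : ℝ) : ℝ := exp (κ * t - exp t)

lemma kernel_pos (κ t : ℝ) : 0 < kernel κ t := exp_pos _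

lemma weight_nonneg (m : ℕ) (g : ℝ) {y : ℝ} (hy : 0 ≤ y) : 0 ≤ weight m g y := by
  have : 0 ≤ 1 - exp (-y) := sub_nonneg.mpr (exp_le_one_iff.mpr (neg_nonpos.mpr hy))
  unfold weight
  positivity

lemma weight_le (m : ℕ) {g y : ℝ} (hg : 0 ≤ g) (hy : 0 < y) :
    weight m g y ≤ y ^ m * (y ^ (g - 1) + 1) := by
  have hfst : (1 + exp (-y)) ^ (-g) ≤ 1 :=
    rpow_le_one_of_one_le_of_nonpos (by linarith [exp_pos (-y)]) (by linarith)
  have hsnd := one_sub_exp_neg_rpow_le hg hy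
  have : 0 ≤ (1 - exp (-y)) ^ (g - 1) :=
    rpow_nonneg (sub_nonneg.mpr (exp_le_one_iff.mpr (by linarith))) _
  unfold weight
  rw [mul_assoc]
  gcongr
  calc (1 + exp (-y)) ^ (-g) * (1 - exp (-y)) ^ (g - 1) ≤ 1 * (1 - exp (-y)) ^ (g - 1) := by
        gcongr
    _ ≤ y ^ (g - 1) + 1 := by rwa [one_mul]

lemma kernel_add_le (κ : ℝ) {x y : ℝ} (hx : 0 ≤ x) (hy : 0 ≤ y) :
    kernel κ (y + x) ≤ exp 1 * kernel κ x * kernel κ y := by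
  have hprod : 0 ≤ (exp x - 1) * (exp y - 1) :=
    mul_nonneg (sub_nonneg.mpr (one_le_exp hx)) (sub_nonneg.mpr (one_le_exp hy))
  unfold kernel
  rw [← exp_add, ← exp_add, exp_le_exp, exp_add]
  nlinarith

lemma kernel_mul_one_add_exp_pow_le {κ : ℝ} (hκ : 0 ≤ κ) (N : ℕ) (t : ℝ) :
    kernel κ t * (1 + exp t) ^ N ≤ 2 ^ N * exp ((κ + N) ^ 2 / 2) := by
  rcases le_total t 0 with ht | ht
  · have hker : kernel κ t ≤ exp ((κ + N) ^ 2 / 2) :=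
      exp_le_exp.mpr (by nlinarith [exp_pos t, sq_nonneg (κ + N)])
    have hpow : (1 + exp t) ^ N ≤ 2 ^ N :=
      pow_le_pow_left₀ (by positivity) (by linarith [exp_le_one_iff.mpr ht]) N
    rw [mul_comm]
    exact mul_le_mul hpow hker (kernel_pos κ t).le (by positivity)
  · have hker : kernel κ t ≤ exp ((κ + N) ^ 2 / 2) * exp (-(N * t)) := by
      rw [← exp_add]
      exact exp_le_exp.mpr (by linarith [mul_sub_exp_le_s3 (by positivity : 0 ≤ κ + N) t])
    have hpow : (1 + exp t) ^ N ≤ 2 ^ N * exp (N * t) := by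
      rw [exp_nat_mul, ← mul_pow]
      exact pow_le_pow_left₀ (by positivity) (by linarith [one_le_exp ht]) N
    calc kernel κ t * (1 + exp t) ^ N
        ≤ exp ((κ + N) ^ 2 / 2) * exp (-(N * t)) * (2 ^ N * exp (N * t)) :=
          mul_le_mul hker hpow (by positivity) (by positivity)
      _ = 2 ^ N * exp ((κ + N) ^ 2 / 2) := by
          rw [exp_neg]; field_simp

lemma kernel_add_mul_one_add_pow_le {κ : ℝ} (hκ : 0 ≤ κ) (N : ℕ) (x : ℝ) {y : ℝ}
    (hy : 0 ≤ y) :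
    kernel κ (y + x) * (1 + y) ^ N ≤ 2 ^ N * exp ((κ + N) ^ 2 / 2) * (1 + |x|) ^ N := by
  -- `y = (y + x) - x ≤ e^{y+x} + |x|`
  have hshift : 1 + y ≤ (1 + |x|) * (1 + exp (y + x)) := by
    nlinarith [add_one_le_exp (y + x), neg_le_abs x, abs_nonneg x, exp_pos (y + x)]
  calc kernel κ (y + x) * (1 + y) ^ N
      ≤ kernel κ (y + x) * ((1 + |x|) ^ N * (1 + exp (y + x)) ^ N) := by
        rw [← mul_pow]
        gcongr
        · exact (kernel_pos κ _).le
    _ = kernel κ (y + x) * (1 + exp (y + x)) ^ N * (1 + |x|) ^ N := by ring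
    _ ≤ 2 ^ N * exp ((κ + N) ^ 2 / 2) * (1 + |x|) ^ N :=
        mul_le_mul_of_nonneg_right (kernel_mul_one_add_exp_pow_le hκ N _) (by positivity)

section
variable {m : ℕ} {g κ : ℝ}

lemma integrableOn_pow_mul_rpow_add_one_div_one_add_pow (hg : 0 < g) {N : ℕ}
    (hN : m + g + 1 < N) :
    IntegrableOn (fun y : ℝ => y ^ m * (y ^ (g - 1) + 1) / (1 + y) ^ N) (Ioi 0) := by
  have h₁ := integrableOn_rpow_div_one_add_pow (s := m + (g - 1)) (N := N)
    (by linarith [m.cast_nonneg (α := ℝ)]) (by linarith)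
  have h₂ := integrableOn_rpow_div_one_add_pow (s := m) (N := N)
    (by linarith [m.cast_nonneg (α := ℝ)]) (by linarith)
  refine (h₁.add h₂).congr_fun (fun y (hy : 0 < y) => ?_) measurableSet_Ioi
  simp only [Pi.add_apply, rpow_add hy, rpow_natCast]
  ring

lemma weight_mul_kernel_le (hg : 0 ≤ g) (hκ : 0 ≤ κ) (N : ℕ) (x : ℝ) {y : ℝ} (hy : 0 < y) :
    weight m g y * kernel κ (y + x) ≤
      2 ^ N * exp ((κ + N) ^ 2 / 2) * (1 + |x|) ^ N *
        (y ^ m * (y ^ (g - 1) + 1) / (1 + y) ^ N) := by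
  set K := 2 ^ N * exp ((κ + N) ^ 2 / 2) * (1 + |x|) ^ N
  have hker : kernel κ (y + x) ≤ K / (1 + y) ^ N :=
    (le_div_iff₀ (by positivity)).mpr (kernel_add_mul_one_add_pow_le hκ N x hy.le)
  calc weight m g y * kernel κ (y + x) ≤ y ^ m * (y ^ (g - 1) + 1) * (K / (1 + y) ^ N) :=
        mul_le_mul (weight_le m hg hy) hker (kernel_pos κ _).le (by positivity)
    _ = _ := by ring

lemma integrableOn_weight_mul_kernel (hg : 0 < g) (hκ : 0 ≤ κ) (x : ℝ) :
    IntegrableOn (fun y => weight m g y * kernel κ (y + x)) (Ioi 0) := by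
  obtain ⟨N, hN⟩ := exists_nat_gt ((m : ℝ) + g + 1)
  have hmeas : Measurable fun y => weight m g y * kernel κ (y + x) := by
    unfold weight kernel
    fun_prop
  refine ((integrableOn_pow_mul_rpow_add_one_div_one_add_pow hg hN).const_mul
    (2 ^ N * exp ((κ + N) ^ 2 / 2) * (1 + |x|) ^ N)).mono' hmeas.aestronglyMeasurable
    (ae_restrict_of_forall_mem measurableSet_Ioi fun y (hy : 0 < y) => ?_)
  rw [Real.norm_of_nonneg (mul_nonneg (weight_nonneg m g hy.le) (kernel_pos κ _).le)]
  exact weight_mul_kernel_le hg.le hκ N x hy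

lemma integral_weight_mul_kernel_nonneg (m : ℕ) (g κ x : ℝ) :
    0 ≤ ∫ y in Ioi 0, weight m g y * kernel κ (y + x) :=
  setIntegral_nonneg measurableSet_Ioi fun y (hy : 0 < y) =>
    mul_nonneg (weight_nonneg m g hy.le) (kernel_pos κ _).le

lemma exists_integral_weight_mul_kernel_le_pow (hg : 0 < g) (hκ : 0 ≤ κ) :
    ∃ (C : ℝ) (N : ℕ), ∀ x,
      ∫ y in Ioi 0, weight m g y * kernel κ (y + x) ≤ C * (1 + |x|) ^ N := by
  obtain ⟨N, hN⟩ := exists_nat_gt ((m : ℝ) + g + 1)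
  refine ⟨2 ^ N * exp ((κ + N) ^ 2 / 2) *
    ∫ y in Ioi 0, y ^ m * (y ^ (g - 1) + 1) / (1 + y) ^ N, N, fun x => ?_⟩
  calc ∫ y in Ioi 0, weight m g y * kernel κ (y + x)
      ≤ ∫ y in Ioi 0, 2 ^ N * exp ((κ + N) ^ 2 / 2) * (1 + |x|) ^ N *
          (y ^ m * (y ^ (g - 1) + 1) / (1 + y) ^ N) :=
        setIntegral_mono_on (integrableOn_weight_mul_kernel hg hκ x)
          ((integrableOn_pow_mul_rpow_add_one_div_one_add_pow hg hN).const_mul _)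
          measurableSet_Ioi fun y hy => weight_mul_kernel_le hg.le hκ N x hy
    _ = _ := by rw [integral_const_mul]; ring

lemma integral_weight_mul_kernel_le_of_nonneg (hg : 0 < g) (hκ : 0 ≤ κ) {x : ℝ}
    (hx : 0 ≤ x) :
    ∫ y in Ioi 0, weight m g y * kernel κ (y + x) ≤
      exp 1 * (∫ y in Ioi 0, weight m g y * kernel κ y) * kernel κ x := by
  have hint₀ : IntegrableOn (fun y => weight m g y * kernel κ y) (Ioi 0) := by
    simpa only [add_zero] using integrableOn_weight_mul_kernel (m := m) hg hκ 0
  calc ∫ y in Ioi 0, weight m g y * kernel κ (y + x)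
      ≤ ∫ y in Ioi 0, exp 1 * kernel κ x * (weight m g y * kernel κ y) := by
        refine setIntegral_mono_on (integrableOn_weight_mul_kernel hg hκ x)
          (hint₀.const_mul _) measurableSet_Ioi fun y (hy : 0 < y) => ?_
        calc weight m g y * kernel κ (y + x)
            ≤ weight m g y * (exp 1 * kernel κ x * kernel κ y) :=
              mul_le_mul_of_nonneg_left (kernel_add_le κ hx hy.le) (weight_nonneg m g hy.le)
          _ = _ := by ring
    _ = _ := by rw [integral_const_mul]; ring

end

end GumbelIntegral

open GumbelIntegral in
theorem stmt3 (m : ℕ) (g κ : ℝ) (hg : 0 < g) (hκ : 0 ≤ κ) :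
    ∃ P : Polynomial ℝ, ∀ x : ℝ,
      IntegrableOn (fun y : ℝ =>
          y ^ m * (1 + Real.exp (-y)) ^ (-g) * (1 - Real.exp (-y)) ^ (g - 1) *
            Real.exp (κ * (y + x) - Real.exp (y + x))) (Set.Ioi (0 : ℝ)) ∧
      (∫ y in Set.Ioi (0 : ℝ),
          y ^ m * (1 + Real.exp (-y)) ^ (-g) * (1 - Real.exp (-y)) ^ (g - 1) *
            Real.exp (κ * (y + x) - Real.exp (y + x)))
        ≤ Polynomial.eval |x| P * Real.exp ((κ * x - Real.exp x) * theta x) := by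
  obtain ⟨C, N, hC⟩ := exists_integral_weight_mul_kernel_le_pow (m := m) hg hκ
  set I₀ := ∫ y in Ioi 0, weight m g y * kernel κ y
  have hI₀ : 0 ≤ I₀ := by simpa only [add_zero] using integral_weight_mul_kernel_nonneg m g κ 0
  refine ⟨.C (exp 1 * I₀) + .C C * (1 + .X) ^ N,
    fun x => ⟨integrableOn_weight_mul_kernel hg hκ x, ?_⟩⟩
  change ∫ y in Ioi 0, weight m g y * kernel κ (y + x) ≤ _
  have hpow : 0 ≤ C * (1 + |x|) ^ N := (integral_weight_mul_kernel_nonneg m g κ x).trans (hC x)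
  simp only [Polynomial.eval_add, Polynomial.eval_mul, Polynomial.eval_C, Polynomial.eval_pow,
    Polynomial.eval_one, Polynomial.eval_X, theta]
  split_ifs with hx
  · calc _ ≤ exp 1 * I₀ * kernel κ x := integral_weight_mul_kernel_le_of_nonneg hg hκ hx
      _ ≤ (exp 1 * I₀ + C * (1 + |x|) ^ N) * exp ((κ * x - exp x) * 1) := by
        rw [mul_one, add_mul]
        exact le_add_of_nonneg_right (mul_nonneg hpow (kernel_pos κ x).le)
  · rw [mul_zero, exp_zero, mul_one]
    linarith [hC x, exp_pos 1, mul_nonneg (exp_pos 1).le hI₀]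
end

section
/- The kernel K(x,y) = A · exp(-2ivy - e^{y-x}) · (1 + βe^{-y})^{-iv - g} · (1 - βe^{-y})^{-iv + g - 1}, defined for y > ln β, satisfies the two differential equations ∂_x K(x,y) = e^{y-x} K(x,y) and ∂_y K(x,y) = (1 - e^{y-x} + (2αe^{-y} - 1 - 2iv)/(1 - β²e^{-2y})) K(x,y), where g = 1/2 + α/β. -/
/-- The kernel of the reflection operator:
`K(x,y) = A · exp(-2ivy - e^{y-x}) · (1+βe^{-y})^{-iv-g} · (1-βe^{-y})^{-iv+g-1}`. -/
noncomputable def reflKer (α β : ℝ) (v A : ℂ) (x y : ℝ) : ℂ :=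
  A * Complex.exp (-2 * Complex.I * v * (y : ℂ) - Complex.exp ((y - x : ℝ) : ℂ)) *
    ((1 + β * Real.exp (-y) : ℝ) : ℂ) ^ (-Complex.I * v - ((1 / 2 + α / β : ℝ) : ℂ)) *
    ((1 - β * Real.exp (-y) : ℝ) : ℂ) ^ (-Complex.I * v + ((1 / 2 + α / β : ℝ) : ℂ) - 1)

/-!
Both identities are logarithmic derivatives. In `x` only the factor `exp (-e^{y-x})` moves and
contributes `e^{y-x}`. In `y`, with `r = e^{-y}` and `D = (1 + βr)(1 - βr) = 1 - β²e^{-2y}`,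
the three factors contribute `-2iv - e^{y-x}`, `βr (iv + g) / (1 + βr)` and
`βr (-iv + g - 1) / (1 - βr)`; on the common denominator `D` the last two add up to
`(2αr + (-2iv - 1) β²r²) / D`, because `2g - 1 = 2α/β`.
-/

open Complex

theorem HasDerivAt.ofReal_cpow_const_of_pos {u : ℝ → ℝ} {u' t : ℝ} (hu : HasDerivAt u u' t)
    (ht : 0 < u t) (c : ℂ) :
    HasDerivAt (fun s => (u s : ℂ) ^ c) (c * u' / u t * (u t : ℂ) ^ c) t := by
  have hne : (u t : ℂ) ≠ 0 := ofReal_ne_zero.mpr ht.ne'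
  have h := (hasStrictDerivAt_cpow_const (c := c) (ofReal_mem_slitPlane.mpr ht)).hasDerivAt.comp t
    hu.ofReal_comp
  refine h.congr_deriv ?_
  rw [cpow_sub _ _ hne, cpow_one]
  field_simp

theorem Real.mul_exp_neg_lt_one_of_log_lt {β y : ℝ} (hβ : 0 < β) (hy : Real.log β < y) :
    β * Real.exp (-y) < 1 := by
  rw [Real.exp_neg, mul_inv_lt_iff₀ (Real.exp_pos y), one_mul]
  exact (Real.log_lt_iff_lt_exp hβ).mp hy

section reflKer

variable (α β : ℝ) (v A : ℂ) (x y : ℝ)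

theorem hasDerivAt_reflKer_fst :
    HasDerivAt (fun t => reflKer α β v A t y) (exp ((y - x : ℝ) : ℂ) * reflKer α β v A x y) x := by
  have hlin : HasDerivAt (fun t : ℝ => ((y - t : ℝ) : ℂ)) (-1) x := by
    simpa using ((hasDerivAt_id x).const_sub y).ofReal_comp
  have hphase := (hlin.cexp.const_sub (-2 * I * v * (y : ℂ))).cexp
  have h : HasDerivAt (fun t => reflKer α β v A t y) _ x :=
    ((hphase.const_mul A).mul_const _).mul_const _
  convert h using 1
  simp only [reflKer]
  ring

theorem hasDerivAt_reflKer_snd (hplus : 0 < 1 + β * Real.exp (-y))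
    (hminus : 0 < 1 - β * Real.exp (-y)) :
    HasDerivAt (fun t => reflKer α β v A x t)
      ((-2 * I * v - exp ((y - x : ℝ) : ℂ)
        + (-I * v - ((1 / 2 + α / β : ℝ) : ℂ)) * (-(β * Real.exp (-y) : ℝ)) /
            (1 + β * Real.exp (-y) : ℝ)
        + (-I * v + ((1 / 2 + α / β : ℝ) : ℂ) - 1) * (β * Real.exp (-y) : ℝ) /
            (1 - β * Real.exp (-y) : ℝ)) * reflKer α β v A x y) y := by
  have hexp : HasDerivAt (fun t => Real.exp (-t)) (-Real.exp (-y)) y := by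
    simpa using (hasDerivAt_neg y).exp
  have hphase : HasDerivAt (fun t : ℝ => -2 * I * v * (t : ℂ) - exp ((t - x : ℝ) : ℂ))
      (-2 * I * v - exp ((y - x : ℝ) : ℂ)) y := by
    have hlin : HasDerivAt (fun t : ℝ => ((t - x : ℝ) : ℂ)) 1 y := by
      simpa using ((hasDerivAt_id y).sub_const x).ofReal_comp
    have hlin' : HasDerivAt (fun t : ℝ => -2 * I * v * (t : ℂ)) (-2 * I * v) y := by
      simpa using ((hasDerivAt_id y).ofReal_comp).const_mul (-2 * I * v)
    exact hlin'.sub (by simpa using hlin.cexp)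
  have hP := HasDerivAt.ofReal_cpow_const_of_pos (u := fun t => 1 + β * Real.exp (-t))
    (by simpa using (hexp.const_mul β).const_add 1) hplus (-I * v - ((1 / 2 + α / β : ℝ) : ℂ))
  have hQ := HasDerivAt.ofReal_cpow_const_of_pos (u := fun t => 1 - β * Real.exp (-t))
    (by simpa using (hexp.const_mul β).const_sub 1) hminus
    (-I * v + ((1 / 2 + α / β : ℝ) : ℂ) - 1)
  have h : HasDerivAt (fun t => reflKer α β v A x t) _ y := ((hphase.cexp.const_mul A).mul hP).mul hQ
  convert h using 1
  simp only [reflKer, Pi.mul_apply]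
  push_cast
  ring

end reflKer

theorem reflKer_logDeriv_snd_eq (α β r : ℝ) (v E : ℂ) (hβ : β ≠ 0) (hplus : 1 + β * r ≠ 0)
    (hminus : 1 - β * r ≠ 0) :
    -2 * I * v - E
        + (-I * v - ((1 / 2 + α / β : ℝ) : ℂ)) * (-(β * r : ℝ)) / (1 + β * r : ℝ)
        + (-I * v + ((1 / 2 + α / β : ℝ) : ℂ) - 1) * (β * r : ℝ) / (1 - β * r : ℝ)
      = 1 - E + ((2 * α * r : ℝ) - 1 - 2 * I * v) / (1 - (β : ℂ) ^ 2 * (r ^ 2 : ℝ)) := by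
  have hβ' : (β : ℂ) ≠ 0 := ofReal_ne_zero.mpr hβ
  have hplus' : (1 + β * r : ℂ) ≠ 0 := by exact_mod_cast hplus
  have hminus' : (1 - β * r : ℂ) ≠ 0 := by exact_mod_cast hminus
  have hD : (1 - (β : ℂ) ^ 2 * (r : ℂ) ^ 2) = (1 + β * r) * (1 - β * r) := by ring
  push_cast
  rw [hD]
  field_simp
  ring

theorem stmt9 (α β : ℝ) (hβ : 0 < β) (v A : ℂ) (x y : ℝ) (hy : Real.log β < y) :
    deriv (fun t => reflKer α β v A t y) x
        = Complex.exp ((y - x : ℝ) : ℂ) * reflKer α β v A x y ∧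
    deriv (fun t => reflKer α β v A x t) y
        = (1 - Complex.exp ((y - x : ℝ) : ℂ) +
            ((2 * α * Real.exp (-y) : ℝ) - 1 - 2 * Complex.I * v) /
              (1 - (β : ℂ) ^ 2 * ((Real.exp (-2 * y) : ℝ) : ℂ))) * reflKer α β v A x y := by
  have hlt := Real.mul_exp_neg_lt_one_of_log_lt hβ hy
  have hplus : 0 < 1 + β * Real.exp (-y) := by positivity
  have hminus : 0 < 1 - β * Real.exp (-y) := by linarith
  have hexp2 : Real.exp (-2 * y) = Real.exp (-y) ^ 2 := by
    rw [← Real.exp_nat_mul]; ring_nf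
  refine ⟨(hasDerivAt_reflKer_fst α β v A x y).deriv, ?_⟩
  rw [(hasDerivAt_reflKer_snd α β v A x y hplus hminus).deriv, hexp2,
    reflKer_logDeriv_snd_eq α β _ v _ hβ.ne' hplus.ne' hminus.ne']
end
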